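/- Let ρ be a density operator of rank m on (ℂ²)^{⊗M} with spectral decomposition ρ = Σ_{i=1}^m λ_i |v_i⟩⟨v_i| (λ_i > 0, {|v_i⟩} orthonormal), and let τ be the m × m matrix with entries τ_{ij} = √(λ_i λ_j)⟨v_i|ṽ_j⟩. Then for every m × m unitary matrix U there exist vectors |x_1⟩, …, |x_m⟩ in (ℂ²)^{⊗M} such that ⟨x_i|x̃_j⟩ = (U τ Uᵀ)_{ij} for all i, j and ρ = Σ_{i=1}^m |x_i⟩⟨x_i|. -/

import Mathlib

open scoped BigOperators ComplexConjugate ComplexOrder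

noncomputable section

namespace QIpaper

/-- Inner product `⟨ψ|φ⟩`, conjugate-linear in the first argument. -/
def braket {I : Type*} [Fintype I] (ψ φ : I → ℂ) : ℂ := ∑ x, conj (ψ x) * φ x

/-- Outer product `|ψ⟩⟨ψ|`. -/
def dm {I : Type*} (ψ : I → ℂ) : Matrix I I ℂ := Matrix.of fun x y => ψ x * conj (ψ y)

open Classical in
/-- Positive semidefinite square root (junk value `0` on non-PSD matrices). -/
def psdSqrt {I : Type*} [Fintype I] [DecidableEq I] (A : Matrix I I ℂ) : Matrix I I ℂ :=
  if h : A.PosSemidef then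
    (h.1.eigenvectorUnitary : Matrix I I ℂ) *
      Matrix.diagonal (fun i => ((Real.sqrt (h.1.eigenvalues i) : ℝ) : ℂ)) *
      (star (h.1.eigenvectorUnitary : Matrix I I ℂ)) else 0

/-- The trace norm `‖A‖₁ = tr √(AᴴA)`. -/
def traceNorm {I : Type*} [Fintype I] [DecidableEq I] (A : Matrix I I ℂ) : ℝ :=
  (psdSqrt (A.conjTranspose * A)).trace.re

/-- Fidelity `F(ρ,σ) = tr √(√ρ σ √ρ)`. -/
def fidelity {I : Type*} [Fintype I] [DecidableEq I] (ρ σ : Matrix I I ℂ) : ℝ :=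
  (psdSqrt (psdSqrt ρ * σ * psdSqrt ρ)).trace.re

/-- Purity `tr(ρ²)`. -/
def purity {I : Type*} [Fintype I] (ρ : Matrix I I ℂ) : ℝ := ((ρ * ρ).trace).re

def sigmaX : Matrix (Fin 2) (Fin 2) ℂ := !![0, 1; 1, 0]
def sigmaY : Matrix (Fin 2) (Fin 2) ℂ := !![0, -Complex.I; Complex.I, 0]
def sigmaZ : Matrix (Fin 2) (Fin 2) ℂ := !![1, 0; 0, -1]

/-- `σ_y^{⊗I}` on the qubits indexed by `I`. -/
def sigmaYn {I : Type*} [Fintype I] [DecidableEq I] : Matrix (I → Fin 2) (I → Fin 2) ℂ :=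
  Matrix.of fun x y => ∏ k, sigmaY (x k) (y k)

/-- The `n`-tangle `τ(ψ) = |⟨ψ|σ_y^{⊗n}|ψ*⟩|`. -/
def tangle {I : Type*} [Fintype I] [DecidableEq I] (ψ : (I → Fin 2) → ℂ) : ℝ :=
  ‖∑ x, ∑ y, conj (ψ x) * sigmaYn x y * conj (ψ y)‖

/-- Entrywise complex conjugate of a matrix. -/
def conjM {I J : Type*} (ρ : Matrix I J ℂ) : Matrix I J ℂ := Matrix.of fun x y => conj (ρ x y)

/-- `ρ̃ = σ_y^{⊗n} ρ* σ_y^{⊗n}`. -/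
def tildeM {I : Type*} [Fintype I] [DecidableEq I] (ρ : Matrix (I → Fin 2) (I → Fin 2) ℂ) :
    Matrix (I → Fin 2) (I → Fin 2) ℂ := sigmaYn * conjM ρ * sigmaYn

/-- The Wootters tilde `|ψ̃⟩ = σ_y^{⊗n}|ψ*⟩`. -/
def wtilde {I : Type*} [Fintype I] [DecidableEq I] (ψ : (I → Fin 2) → ℂ) : (I → Fin 2) → ℂ :=
  sigmaYn.mulVec (fun x => conj (ψ x))

/-- Reduced density matrix of the pure state `ψ` on the qubits in `s`
(tracing out the complement). -/
def reduced {n : ℕ} (s : Finset (Fin n)) (ψ : (Fin n → Fin 2) → ℂ) :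
    Matrix ({i : Fin n // i ∈ s} → Fin 2) ({i : Fin n // i ∈ s} → Fin 2) ℂ :=
  Matrix.of fun a b => ∑ c : {i : Fin n // i ∉ s} → Fin 2,
    ψ (fun i => if h : i ∈ s then a ⟨i, h⟩ else c ⟨i, h⟩) *
    conj (ψ (fun i => if h : i ∈ s then b ⟨i, h⟩ else c ⟨i, h⟩))

/-- GME-concurrence `C_GME(ψ) = min_{∅ ⊊ γ ⊊ [n]} √(2(1 − tr ψ_γ²))`. -/
def gme {n : ℕ} (ψ : (Fin n → Fin 2) → ℂ) : ℝ :=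
  sInf {r : ℝ | ∃ γ : Finset (Fin n), γ ≠ ∅ ∧ γ ≠ Finset.univ ∧
    r = Real.sqrt (2 * (1 - purity (reduced γ ψ)))}

/-- Concentratable entanglement `C(ψ; s) = 1 − 2^{−|s|} Σ_{γ⊆s} tr(ψ_γ²)`. -/
def CE {n : ℕ} (ψ : (Fin n → Fin 2) → ℂ) (s : Finset (Fin n)) : ℝ :=
  1 - (1 / 2 ^ s.card) * ∑ γ ∈ s.powerset, purity (reduced γ ψ)

/-- The subnormalized post-measurement vector `(⟨v|⊗I)|Ψ⟩`. -/
def contract {IA IB : Type*} [Fintype IA] (v : IA → ℂ) (Ψ : IA × IB → ℂ) : IB → ℂ :=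
  fun y => ∑ x, conj (v x) * Ψ (x, y)

/-- Probability `p_v = ⟨Ψ|(|v⟩⟨v| ⊗ I)|Ψ⟩` of outcome `v`. -/
def prob {IA IB : Type*} [Fintype IA] [Fintype IB] (v : IA → ℂ) (Ψ : IA × IB → ℂ) : ℝ :=
  (braket (contract v Ψ) (contract v Ψ)).re

/-- Normalized post-measurement state (the zero vector when the probability vanishes). -/
def postState {IA IB : Type*} [Fintype IA] [Fintype IB] (v : IA → ℂ) (Ψ : IA × IB → ℂ) :
    IB → ℂ := fun y => ((Real.sqrt (prob v Ψ) : ℂ))⁻¹ * contract v Ψ y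

/-- `b` is an orthonormal family. (An orthonormal family indexed by the space's own
index type is an orthonormal basis.) -/
def ONB {J I : Type*} [Fintype I] [DecidableEq J] (b : J → I → ℂ) : Prop :=
  ∀ i j, braket (b i) (b j) = if i = j then 1 else 0

/-- Average post-measurement entanglement `Ē_β(Ψ) = Σ_i p_i E(φ_i)`. -/
def avgE {ι IA IB : Type*} [Fintype ι] [Fintype IA] [Fintype IB]
    (E : (IB → ℂ) → ℝ) (b : ι → IA → ℂ) (Ψ : IA × IB → ℂ) : ℝ :=
  ∑ i, prob (b i) Ψ * E (postState (b i) Ψ)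

/-- Multipartite entanglement of assistance: supremum of `Ē_β` over all
orthonormal bases `β` of `H_A`. -/
def Lglobal {IA IB : Type*} [Fintype IA] [Fintype IB] [DecidableEq IA]
    (E : (IB → ℂ) → ℝ) (Ψ : IA × IB → ℂ) : ℝ :=
  sSup {r : ℝ | ∃ b : IA → IA → ℂ, ONB b ∧ r = avgE E b Ψ}

/-- Tensor-product basis of `(ℂ²)^{⊗K}` built from single-qubit bases. -/
def productBasis {K : Type*} [Fintype K] (q : K → Fin 2 → Fin 2 → ℂ) :
    (K → Fin 2) → (K → Fin 2) → ℂ :=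
  fun i x => ∏ k, q k (i k) (x k)

/-- Localizable multipartite entanglement: supremum of `Ē_β` over product bases of
single-qubit orthonormal bases of `H_A = (ℂ²)^{⊗K}`. -/
def Lloc {K IB : Type*} [Fintype K] [DecidableEq K] [Fintype IB]
    (E : (IB → ℂ) → ℝ) (Ψ : (K → Fin 2) × IB → ℂ) : ℝ :=
  sSup {r : ℝ | ∃ q : K → Fin 2 → Fin 2 → ℂ, (∀ k, ONB (q k)) ∧
    r = avgE E (productBasis q) Ψ}

/-- Partial trace over the `A` system of `|Ψ⟩⟨Ψ|`. -/
def ptraceA {IA IB : Type*} [Fintype IA] (Ψ : IA × IB → ℂ) : Matrix IB IB ℂ :=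
  Matrix.of fun y y' => ∑ x, Ψ (x, y) * conj (Ψ (x, y'))

/-- Reduced density matrix of `|Ψ⟩⟨Ψ|` on the subset `s` of the `B` qubits. -/
def reducedB {IA : Type*} [Fintype IA] {n : ℕ} (s : Finset (Fin n))
    (Ψ : IA × (Fin n → Fin 2) → ℂ) :
    Matrix ({i : Fin n // i ∈ s} → Fin 2) ({i : Fin n // i ∈ s} → Fin 2) ℂ :=
  Matrix.of fun a b => ∑ x : IA, ∑ c : {i : Fin n // i ∉ s} → Fin 2,
    Ψ (x, fun i => if h : i ∈ s then a ⟨i, h⟩ else c ⟨i, h⟩) *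
    conj (Ψ (x, fun i => if h : i ∈ s then b ⟨i, h⟩ else c ⟨i, h⟩))

open Matrix

/-! Let `W` be the matrix whose rows are `wₗ = √λₗ vₗ`, so that `ρ = Σₗ |wₗ⟩⟨wₗ|` and `τ` is the
matrix of the form `⟨wₗ|w̃ₖ⟩`. Take `xᵢ` to be the rows of `Ū W`. The form `⟨x|ỹ⟩` is conjugate
linear in both `x` and `y`, so the conjugation in `Ū` cancels twice and `⟨xᵢ|x̃ⱼ⟩ = (U τ Uᵀ)ᵢⱼ`
for any `U`; and `Σᵢ |xᵢ⟩⟨xᵢ| = Wᵀ Uᴴ U W̄ = Wᵀ W̄ = ρ` because `U` is unitary. -/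

section

variable {m n : Type*}

lemma conjTranspose_transpose_conjTranspose (A : Matrix m n ℂ) : Aᴴᵀᴴ = Aᵀ :=
  conjTranspose_conjTranspose Aᵀ

lemma conjTranspose_transpose_conjTranspose_transpose (A : Matrix m n ℂ) : Aᴴᵀᴴᵀ = A := by
  rw [conjTranspose_transpose_conjTranspose, transpose_transpose]

end

section

variable {ι κ I : Type*} [Fintype ι] [Fintype κ] [DecidableEq κ]

lemma sum_dm_eq_transpose_mul (X : Matrix ι I ℂ) : ∑ i, dm (X i) = Xᵀ * Xᴴᵀ := by
  ext a b
  simp [dm, Matrix.sum_apply, mul_apply]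

lemma sum_dm_conjTranspose_transpose_mul {U : Matrix κ κ ℂ} (hU : U ∈ unitaryGroup κ ℂ)
    (W : Matrix κ I ℂ) : ∑ i, dm ((Uᴴᵀ * W) i) = ∑ l, dm (W l) := by
  have hUU : Uᴴ * U = 1 := mem_unitaryGroup_iff'.mp hU
  rw [sum_dm_eq_transpose_mul, sum_dm_eq_transpose_mul, transpose_mul, conjTranspose_mul,
    transpose_mul, transpose_transpose, conjTranspose_transpose_conjTranspose_transpose,
    Matrix.mul_assoc, ← Matrix.mul_assoc Uᴴ, hUU, Matrix.one_mul]

end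

section

variable {ι κ J : Type*} [Fintype κ] [Fintype J] [DecidableEq J]

def woottersGram (X : Matrix ι (J → Fin 2) ℂ) : Matrix ι ι ℂ :=
  of fun i j => braket (X i) (wtilde (X j))

lemma woottersGram_eq_conjTranspose_transpose_mul (X : Matrix ι (J → Fin 2) ℂ) :
    woottersGram X = Xᴴᵀ * (sigmaYn : Matrix (J → Fin 2) (J → Fin 2) ℂ) * Xᴴ := by
  ext i j
  simp only [woottersGram, braket, wtilde, of_apply, mul_apply, mulVec, dotProduct,
    Finset.mul_sum, Finset.sum_mul, mul_assoc]
  exact Finset.sum_comm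

lemma woottersGram_conjTranspose_transpose_mul (A : Matrix ι κ ℂ) (W : Matrix κ (J → Fin 2) ℂ) :
    woottersGram (Aᴴᵀ * W) = A * woottersGram W * Aᵀ := by
  rw [woottersGram_eq_conjTranspose_transpose_mul, woottersGram_eq_conjTranspose_transpose_mul,
    conjTranspose_mul, transpose_mul, conjTranspose_transpose_conjTranspose_transpose,
    conjTranspose_transpose_conjTranspose]
  simp only [Matrix.mul_assoc]

end

lemma conjTranspose_transpose_diagonal_ofReal {κ : Type*} [DecidableEq κ] (d : κ → ℝ) :
    (diagonal fun l => (d l : ℂ))ᴴᵀ = diagonal fun l => (d l : ℂ) := by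
  rw [diagonal_conjTranspose, diagonal_transpose]
  simp only [Pi.star_def, Complex.star_def, Complex.conj_ofReal]

lemma woottersGram_diagonal_ofReal_mul {κ J : Type*} [Fintype κ] [DecidableEq κ] [Fintype J]
    [DecidableEq J] (d : κ → ℝ) (V : Matrix κ (J → Fin 2) ℂ) :
    woottersGram (diagonal (fun l => (d l : ℂ)) * V) =
      of fun i j => ((d i * d j : ℝ) : ℂ) * woottersGram V i j := by
  conv_lhs => rw [← conjTranspose_transpose_diagonal_ofReal]
  ext i j
  rw [woottersGram_conjTranspose_transpose_mul, diagonal_transpose, mul_diagonal, diagonal_mul,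
    of_apply, Complex.ofReal_mul]
  ring

lemma dm_sqrt_smul {I : Type*} {r : ℝ} (hr : 0 ≤ r) (ψ : I → ℂ) :
    dm ((Real.sqrt r : ℂ) • ψ) = (r : ℂ) • dm ψ := by
  have hsq : (Real.sqrt r : ℂ) * conj (Real.sqrt r : ℂ) = r := by
    rw [Complex.conj_ofReal, ← Complex.ofReal_mul, Real.mul_self_sqrt hr]
  rw [← hsq]
  ext a b
  simp only [dm, of_apply, Pi.smul_apply, Matrix.smul_apply, smul_eq_mul, map_mul]
  ring

theorem wootters_decomposition_general
    (M m : ℕ)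
    (ρ : Matrix (Fin M → Fin 2) (Fin M → Fin 2) ℂ)
    (lam : Fin m → ℝ) (hlam : ∀ i, 0 < lam i)
    (v : Fin m → (Fin M → Fin 2) → ℂ)
    (hρ : ρ = ∑ i, (lam i : ℂ) • dm (v i))
    (U : Matrix (Fin m) (Fin m) ℂ) (hU : U ∈ Matrix.unitaryGroup (Fin m) ℂ) :
    ∃ x : Fin m → (Fin M → Fin 2) → ℂ,
      (∀ i j, braket (x i) (wtilde (x j)) =
        (U * (Matrix.of fun i j =>
          (Real.sqrt (lam i * lam j) : ℂ) * braket (v i) (wtilde (v j))) *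
          U.transpose) i j) ∧
      ρ = ∑ i, dm (x i) := by
  set W : Matrix (Fin m) (Fin M → Fin 2) ℂ :=
    diagonal (fun l => (Real.sqrt (lam l) : ℂ)) * of v with hW
  have hτ : woottersGram W =
      of fun i j => (Real.sqrt (lam i * lam j) : ℂ) * braket (v i) (wtilde (v j)) := by
    rw [hW, woottersGram_diagonal_ofReal_mul]
    ext i j
    rw [of_apply, of_apply, ← Real.sqrt_mul (hlam i).le]
    rfl
  have hdm : ∀ l, dm (W l) = (lam l : ℂ) • dm (v l) := fun l => by
    rw [hW, ← dm_sqrt_smul (hlam l).le]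
    congr 1
    ext y
    simp only [diagonal_mul, of_apply, Pi.smul_apply, smul_eq_mul]
  refine ⟨Uᴴᵀ * W, fun i j => ?_, ?_⟩
  · rw [← hτ, ← woottersGram_conjTranspose_transpose_mul]
    rfl
  · rw [sum_dm_conjTranspose_transpose_mul hU, hρ]
    simp only [hdm]

/-- Given a rank-`m` density operator `ρ` on `(ℂ²)^{⊗M}` with spectral
decomposition `ρ = Σᵢ λᵢ|vᵢ⟩⟨vᵢ|` (with `λᵢ > 0` and `{|vᵢ⟩}` orthonormal) and the `m × m`
matrix `τᵢⱼ = √(λᵢλⱼ)⟨vᵢ|ṽⱼ⟩`, for every `m × m` unitary `U` there is a decomposition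
`ρ = Σᵢ |xᵢ⟩⟨xᵢ|` with `⟨xᵢ|x̃ⱼ⟩ = (UτUᵀ)ᵢⱼ`. -/
theorem wootters_decomposition
    (M m : ℕ) (hm : 0 < m)
    (ρ : Matrix (Fin M → Fin 2) (Fin M → Fin 2) ℂ)
    (lam : Fin m → ℝ) (hlam : ∀ i, 0 < lam i)
    (v : Fin m → (Fin M → Fin 2) → ℂ) (hv : ONB v)
    (hρ : ρ = ∑ i, (lam i : ℂ) • dm (v i))
    (htr : ∑ i, lam i = 1)
    (U : Matrix (Fin m) (Fin m) ℂ) (hU : U ∈ Matrix.unitaryGroup (Fin m) ℂ) :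
    ∃ x : Fin m → (Fin M → Fin 2) → ℂ,
      (∀ i j, braket (x i) (wtilde (x j)) =
        (U * (Matrix.of fun i j =>
          (Real.sqrt (lam i * lam j) : ℂ) * braket (v i) (wtilde (v j))) *
          U.transpose) i j) ∧
      ρ = ∑ i, dm (x i) :=
  wootters_decomposition_general M m ρ lam hlam v hρ U hU

end QIpaper
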